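/- arXiv:1703.05449 — 3 statements merged into one kernel-verified Lean document; each statement's English description precedes it below -/
import Mathlib

section
/- Let (S, A, P, R, H) be a finite-horizon MDP and π a policy. Consider the random trajectory (x_1, …, x_H) started from any fixed state x_1, where x_{h+1} ∼ P(·|x_h, π(x_h,h)) for h = 1,…,H−1, and let G = Σ_{h=1}^{H} R(x_h, π(x_h,h)) be the return. Then E[ Σ_{h=1}^{H−1} Var_{Y∼P(·|x_h,π(x_h,h))}( V^π_{h+1}(Y) ) ] = Var(G). -/
/-- Value function of policy `π`, indexed by the number of remaining steps:
`Vpol P R H π j x = V^π_{H+1-j}(x)`, where `π x h` is the action taken at step `h`. -/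
noncomputable def Vpol {S A : Type*} [Fintype S] (P : S → A → S → ℝ) (R : S → A → ℝ)
    (H : ℕ) (π : S → ℕ → A) : ℕ → S → ℝ
  | 0, _ => 0
  | j + 1, x => R x (π x (H - j)) + ∑ y, P x (π x (H - j)) y * Vpol P R H π j y

/-- Variance of `f` under the finite distribution `p`. -/
noncomputable def varD {S : Type*} [Fintype S] (p : S → ℝ) (f : S → ℝ) : ℝ :=
  ∑ y, p y * f y ^ 2 - (∑ y, p y * f y) ^ 2

/-- Position `h − 1` of step `h = p + 1` inside a length-`H` trajectory, for `p < H − 1`. -/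
def pos1 {H : ℕ} (p : Fin (H - 1)) : Fin H := ⟨p.val, by have := p.isLt; omega⟩

/-- Position of step `h + 1 = p + 2` inside a length-`H` trajectory, for `p < H − 1`. -/
def pos2 {H : ℕ} (p : Fin (H - 1)) : Fin H := ⟨p.val + 1, by have := p.isLt; omega⟩

/-- Probability of the trajectory `τ = (x_1, …, x_H)` of the Markov chain generated by
following policy `π` from the fixed initial state `x1`:
`1{τ_1 = x1} · ∏_{h=1}^{H−1} P(τ_{h+1} | τ_h, π(τ_h, h))`. -/
noncomputable def trajWeight {S A : Type*} [Fintype S] [DecidableEq S]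
    (P : S → A → S → ℝ) (π : S → ℕ → A) (H : ℕ) (hH : 0 < H) (x1 : S)
    (τ : Fin H → S) : ℝ :=
  (if τ ⟨0, hH⟩ = x1 then 1 else 0) *
    ∏ p : Fin (H - 1), P (τ (pos1 p)) (π (τ (pos1 p)) (p.val + 1)) (τ (pos2 p))

/-- Return of the trajectory `τ`: `G(τ) = ∑_{h=1}^{H} R(τ_h, π(τ_h, h))`. -/
noncomputable def ret {S A : Type*} (R : S → A → ℝ) (π : S → ℕ → A) (H : ℕ)
    (τ : Fin H → S) : ℝ :=
  ∑ h : Fin H, R (τ h) (π (τ h) (h.val + 1))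

section LTV
variable {S A : Type*} [Fintype S] [DecidableEq S]

/-- Shift the policy's time index by one. -/
def shiftPol {S A : Type*} (π : S → ℕ → A) : S → ℕ → A := fun x h => π x (h + 1)

lemma Vpol_shift (P : S → A → S → ℝ) (R : S → A → ℝ) (H : ℕ) (π : S → ℕ → A) :
    ∀ j, j ≤ H → Vpol P R (H + 1) π j = Vpol P R H (shiftPol π) j := by
  intro j
  induction j with
  | zero => intro _; rfl
  | succ j ih =>
    intro hj
    have hj' : j ≤ H := Nat.le_of_succ_le hj
    have hsub : H + 1 - j = (H - j) + 1 := by omega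
    funext x
    simp only [Vpol, ih hj', hsub, shiftPol]

lemma trajWeight_cons (P : S → A → S → ℝ) (m : ℕ) (π : S → ℕ → A) (h2 : 0 < m + 1 + 1)
    (x1 x0 : S) (τ : Fin (m + 1) → S) :
    trajWeight P π (m + 1 + 1) h2 x1 (Fin.cons x0 τ)
      = (if x0 = x1 then 1 else 0) *
        (P x0 (π x0 1) (τ ⟨0, Nat.succ_pos m⟩) *
          ∏ p : Fin m, P (τ (pos1 (H := m + 1) p))
            (shiftPol π (τ (pos1 (H := m + 1) p)) (p.val + 1)) (τ (pos2 (H := m + 1) p))) := by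
  unfold trajWeight
  have e0 : (Fin.cons x0 τ : Fin (m + 1 + 1) → S) ⟨0, h2⟩ = x0 := rfl
  rw [e0]
  congr 1
  rw [show (∏ p : Fin (m + 1 + 1 - 1), P ((Fin.cons x0 τ : Fin (m+1+1) → S) (pos1 p))
        (π ((Fin.cons x0 τ : Fin (m+1+1) → S) (pos1 p)) (p.val + 1))
        ((Fin.cons x0 τ : Fin (m+1+1) → S) (pos2 p)))
      = ∏ p : Fin (m + 1), P ((Fin.cons x0 τ : Fin (m+1+1) → S) (pos1 (H := m+1+1) p))
        (π ((Fin.cons x0 τ : Fin (m+1+1) → S) (pos1 (H := m+1+1) p)) (p.val + 1))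
        ((Fin.cons x0 τ : Fin (m+1+1) → S) (pos2 (H := m+1+1) p)) from rfl]
  rw [Fin.prod_univ_succ]
  rfl

lemma ret_cons (R : S → A → ℝ) (m : ℕ) (π : S → ℕ → A) (x1 : S) (τ : Fin (m + 1) → S) :
    ret R π (m + 1 + 1) (Fin.cons x1 τ)
      = R x1 (π x1 1) + ret R (shiftPol π) (m + 1) τ := by
  unfold ret
  rw [Fin.sum_univ_succ]
  rfl

lemma sum_traj_one (P : S → A → S → ℝ) (π : S → ℕ → A) (hH : 0 < 0 + 1) (x1 : S)
    (f : (Fin (0 + 1) → S) → ℝ) :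
    ∑ τ : Fin (0 + 1) → S, trajWeight P π (0 + 1) hH x1 τ * f τ = f (fun _ => x1) := by
  rw [Finset.sum_eq_single (fun _ => x1)]
  · unfold trajWeight
    simp
  · intro τ _ hne
    have h0 : τ ⟨0, hH⟩ ≠ x1 := by
      intro h
      apply hne
      funext i
      have : i = ⟨0, hH⟩ := Fin.ext (by omega)
      rw [this, h]
    unfold trajWeight
    rw [if_neg h0]
    simp
  · intro h
    exact absurd (Finset.mem_univ _) h

lemma sum_traj_succ (P : S → A → S → ℝ) (m : ℕ) (π : S → ℕ → A)
    (h2 : 0 < m + 1 + 1) (h1 : 0 < m + 1) (x1 : S) (f : (Fin (m + 1 + 1) → S) → ℝ) :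
    ∑ τ : Fin (m + 1 + 1) → S, trajWeight P π (m + 1 + 1) h2 x1 τ * f τ
      = ∑ y, P x1 (π x1 1) y *
          ∑ τ : Fin (m + 1) → S,
            trajWeight P (shiftPol π) (m + 1) h1 y τ * f (Fin.cons x1 τ) := by
  rw [← ((Fin.consEquiv (fun _ : Fin (m + 1 + 1) => S)).sum_comp
      (fun τ => trajWeight P π (m + 1 + 1) h2 x1 τ * f τ))]
  rw [Fintype.sum_prod_type]
  simp only [Fin.consEquiv, Equiv.coe_fn_mk, trajWeight_cons]
  rw [Finset.sum_comm]
  simp only [ite_mul, one_mul, zero_mul, Finset.sum_ite_eq', Finset.mem_univ, if_true]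
  conv_rhs => simp only [trajWeight, Finset.mul_sum]
  rw [Finset.sum_comm]
  simp only [mul_ite, mul_one, mul_zero, ite_mul, one_mul, zero_mul,
    Finset.sum_ite_eq, Finset.mem_univ, if_true]
  apply Finset.sum_congr rfl
  intro τ _
  rw [mul_assoc]
  rfl


lemma Vpol_succ (P : S → A → S → ℝ) (R : S → A → ℝ) (H : ℕ) (π : S → ℕ → A) (j : ℕ) (x : S) :
    Vpol P R H π (j + 1) x
      = R x (π x (H - j)) + ∑ y, P x (π x (H - j)) y * Vpol P R H π j y := rfl

lemma sum_trajWeight (P : S → A → S → ℝ) (hP1 : ∀ x a, ∑ y, P x a y = 1) :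
    ∀ (n : ℕ) (hH : 0 < n + 1) (π : S → ℕ → A) (x1 : S),
      ∑ τ : Fin (n + 1) → S, trajWeight P π (n + 1) hH x1 τ = 1 := by
  intro n
  induction n with
  | zero =>
    intro hH π x1
    have h := sum_traj_one P π hH x1 (fun _ => 1)
    simpa using h
  | succ m ih =>
    intro hH π x1
    have h := sum_traj_succ P m π hH (Nat.succ_pos m) x1 (fun _ => 1)
    simp only [mul_one] at h
    rw [h]
    simp only [ih (Nat.succ_pos m) (shiftPol π), mul_one]
    exact hP1 x1 (π x1 1)

lemma sum_ret (P : S → A → S → ℝ) (R : S → A → ℝ) (hP1 : ∀ x a, ∑ y, P x a y = 1) :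
    ∀ (n : ℕ) (hH : 0 < n + 1) (π : S → ℕ → A) (x1 : S),
      ∑ τ : Fin (n + 1) → S, trajWeight P π (n + 1) hH x1 τ * ret R π (n + 1) τ
        = Vpol P R (n + 1) π (n + 1) x1 := by
  intro n
  induction n with
  | zero =>
    intro hH π x1
    rw [sum_traj_one P π hH x1 (ret R π (0 + 1))]
    simp [ret, Vpol]
  | succ m ih =>
    intro hH π x1
    rw [sum_traj_succ P m π hH (Nat.succ_pos m) x1 (ret R π (m + 1 + 1))]
    simp only [ret_cons]
    have key1 : ∀ y : S,
        ∑ τ : Fin (m + 1) → S, trajWeight P (shiftPol π) (m + 1) (Nat.succ_pos m) y τ *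
          (R x1 (π x1 1) + ret R (shiftPol π) (m + 1) τ)
        = R x1 (π x1 1) + Vpol P R (m + 1) (shiftPol π) (m + 1) y := by
      intro y
      rw [Finset.sum_congr rfl (fun τ _ => mul_add _ _ _), Finset.sum_add_distrib,
        ← Finset.sum_mul, sum_trajWeight P hP1 m (Nat.succ_pos m) (shiftPol π) y,
        one_mul, ih (Nat.succ_pos m) (shiftPol π) y]
    simp only [key1]
    have h1 : m + 1 + 1 - (m + 1) = 1 := by omega
    rw [Vpol_succ P R (m + 1 + 1) π (m + 1) x1, h1,
      Vpol_shift P R (m + 1) π (m + 1) le_rfl]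
    rw [Finset.sum_congr rfl (fun y (_ : y ∈ Finset.univ) => mul_add (P x1 (π x1 1) y) _ _),
      Finset.sum_add_distrib, ← Finset.sum_mul, hP1 x1 (π x1 1), one_mul]

lemma varsum_cons (P : S → A → S → ℝ) (R : S → A → ℝ) (m : ℕ) (π : S → ℕ → A)
    (x1 : S) (τ : Fin (m + 1) → S) :
    (∑ p : Fin (m + 1),
      varD (P ((Fin.cons x1 τ : Fin (m + 1 + 1) → S) (pos1 (H := m + 1 + 1) p))
          (π ((Fin.cons x1 τ : Fin (m + 1 + 1) → S) (pos1 (H := m + 1 + 1) p)) (p.val + 1)))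
        (Vpol P R (m + 1 + 1) π (m + 1 - p.val)))
      = varD (P x1 (π x1 1)) (Vpol P R (m + 1) (shiftPol π) (m + 1))
        + ∑ p : Fin m,
            varD (P (τ (pos1 (H := m + 1) p))
                (shiftPol π (τ (pos1 (H := m + 1) p)) (p.val + 1)))
              (Vpol P R (m + 1) (shiftPol π) (m - p.val)) := by
  rw [Fin.sum_univ_succ]
  congr 1
  · have hv0 : Vpol P R (m + 1 + 1) π (m + 1 - ((0 : Fin (m + 1)) : ℕ))
        = Vpol P R (m + 1) (shiftPol π) (m + 1) := by
      rw [show (m + 1 - ((0 : Fin (m + 1)) : ℕ)) = m + 1 from by simp]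
      exact Vpol_shift P R (m + 1) π (m + 1) le_rfl
    rw [hv0]
    rfl
  · apply Finset.sum_congr rfl
    intro p _
    have hv : Vpol P R (m + 1 + 1) π (m + 1 - ((p.succ : Fin (m + 1)) : ℕ))
        = Vpol P R (m + 1) (shiftPol π) (m - p.val) := by
      rw [show (m + 1 - ((p.succ : Fin (m + 1)) : ℕ)) = m - p.val from by
        simp [Fin.val_succ]]
      exact Vpol_shift P R (m + 1) π (m - p.val) (by omega)
    rw [hv]
    rfl

lemma final_algebra (P1 Q V : S → ℝ) (a c : ℝ) (hsum : ∑ y, P1 y = 1)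
    (hc : c = (∑ y, P1 y * (V y) ^ 2) - (∑ y, P1 y * V y) ^ 2) :
    ∑ y, P1 y * (c + (Q y - (V y) ^ 2))
      = (∑ y, P1 y * ((a) ^ 2 + 2 * a * V y + Q y)) - (∑ y, P1 y * (a + V y)) ^ 2 := by
  have e1 : ∀ y ∈ Finset.univ, P1 y * (c + (Q y - (V y) ^ 2))
      = c * P1 y + (P1 y * Q y - P1 y * (V y) ^ 2) := fun y _ => by ring
  have e2 : ∀ y ∈ Finset.univ, P1 y * ((a) ^ 2 + 2 * a * V y + Q y)
      = a ^ 2 * P1 y + ((2 * a) * (P1 y * V y) + P1 y * Q y) := fun y _ => by ring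
  have e3 : ∀ y ∈ Finset.univ, P1 y * (a + V y) = a * P1 y + P1 y * V y := fun y _ => by ring
  rw [Finset.sum_congr rfl e1, Finset.sum_congr rfl e2, Finset.sum_congr rfl e3,
    Finset.sum_add_distrib, Finset.sum_add_distrib, Finset.sum_add_distrib,
    Finset.sum_add_distrib, Finset.sum_sub_distrib, ← Finset.mul_sum, ← Finset.mul_sum,
    ← Finset.mul_sum, ← Finset.mul_sum, hsum, hc]
  ring

lemma key (P : S → A → S → ℝ) (R : S → A → ℝ) (hP1 : ∀ x a, ∑ y, P x a y = 1) :
    ∀ (n : ℕ) (hH : 0 < n + 1) (π : S → ℕ → A) (x1 : S),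
    ∑ τ : Fin (n + 1) → S, trajWeight P π (n + 1) hH x1 τ *
        (∑ p : Fin n,
          varD (P (τ (pos1 (H := n + 1) p)) (π (τ (pos1 (H := n + 1) p)) (p.val + 1)))
            (Vpol P R (n + 1) π (n - p.val)))
      = (∑ τ : Fin (n + 1) → S, trajWeight P π (n + 1) hH x1 τ * (ret R π (n + 1) τ) ^ 2)
        - (∑ τ : Fin (n + 1) → S, trajWeight P π (n + 1) hH x1 τ * ret R π (n + 1) τ) ^ 2 := by
  intro n
  induction n with
  | zero =>
    intro hH π x1
    rw [sum_traj_one P π hH x1, sum_traj_one P π hH x1, sum_traj_one P π hH x1]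
    simp
  | succ m ih =>
    intro hH π x1
    rw [sum_traj_succ P m π hH (Nat.succ_pos m) x1,
      sum_traj_succ P m π hH (Nat.succ_pos m) x1,
      sum_traj_succ P m π hH (Nat.succ_pos m) x1]
    simp only [varsum_cons, ret_cons]
    have hw : ∀ y : S, ∑ τ : Fin (m + 1) → S,
        trajWeight P (shiftPol π) (m + 1) (Nat.succ_pos m) y τ = 1 :=
      fun y => sum_trajWeight P hP1 m (Nat.succ_pos m) (shiftPol π) y
    have hr : ∀ y : S, ∑ τ : Fin (m + 1) → S,
        trajWeight P (shiftPol π) (m + 1) (Nat.succ_pos m) y τ * ret R (shiftPol π) (m + 1) τ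
        = Vpol P R (m + 1) (shiftPol π) (m + 1) y :=
      fun y => sum_ret P R hP1 m (Nat.succ_pos m) (shiftPol π) y
    have hF : ∀ y : S, ∑ τ : Fin (m + 1) → S,
        trajWeight P (shiftPol π) (m + 1) (Nat.succ_pos m) y τ *
          (varD (P x1 (π x1 1)) (Vpol P R (m + 1) (shiftPol π) (m + 1))
            + ∑ p : Fin m, varD
                (P (τ (pos1 (H := m + 1) p)) (shiftPol π (τ (pos1 (H := m + 1) p)) (p.val + 1)))
                (Vpol P R (m + 1) (shiftPol π) (m - p.val)))
        = varD (P x1 (π x1 1)) (Vpol P R (m + 1) (shiftPol π) (m + 1))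
          + ((∑ τ : Fin (m + 1) → S, trajWeight P (shiftPol π) (m + 1) (Nat.succ_pos m) y τ *
                (ret R (shiftPol π) (m + 1) τ) ^ 2)
              - (Vpol P R (m + 1) (shiftPol π) (m + 1) y) ^ 2) := by
      intro y
      rw [Finset.sum_congr rfl (fun τ (_ : τ ∈ Finset.univ) =>
          mul_add (trajWeight P (shiftPol π) (m + 1) (Nat.succ_pos m) y τ) _ _),
        Finset.sum_add_distrib, ← Finset.sum_mul, hw y, one_mul,
        ih (Nat.succ_pos m) (shiftPol π) y, hr y]
    have hG2 : ∀ y : S, ∑ τ : Fin (m + 1) → S,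
        trajWeight P (shiftPol π) (m + 1) (Nat.succ_pos m) y τ *
          (R x1 (π x1 1) + ret R (shiftPol π) (m + 1) τ) ^ 2
        = (R x1 (π x1 1)) ^ 2
          + 2 * R x1 (π x1 1) * Vpol P R (m + 1) (shiftPol π) (m + 1) y
          + ∑ τ : Fin (m + 1) → S, trajWeight P (shiftPol π) (m + 1) (Nat.succ_pos m) y τ *
              (ret R (shiftPol π) (m + 1) τ) ^ 2 := by
      intro y
      have e : ∀ τ ∈ (Finset.univ : Finset (Fin (m + 1) → S)),
          trajWeight P (shiftPol π) (m + 1) (Nat.succ_pos m) y τ *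
            (R x1 (π x1 1) + ret R (shiftPol π) (m + 1) τ) ^ 2
          = (R x1 (π x1 1)) ^ 2 * trajWeight P (shiftPol π) (m + 1) (Nat.succ_pos m) y τ
            + ((2 * R x1 (π x1 1)) *
                (trajWeight P (shiftPol π) (m + 1) (Nat.succ_pos m) y τ *
                  ret R (shiftPol π) (m + 1) τ)
              + trajWeight P (shiftPol π) (m + 1) (Nat.succ_pos m) y τ *
                  (ret R (shiftPol π) (m + 1) τ) ^ 2) := fun τ _ => by ring
      rw [Finset.sum_congr rfl e, Finset.sum_add_distrib, Finset.sum_add_distrib,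
        ← Finset.mul_sum, ← Finset.mul_sum, hw y, hr y, mul_one]
      ring
    have hG : ∀ y : S, ∑ τ : Fin (m + 1) → S,
        trajWeight P (shiftPol π) (m + 1) (Nat.succ_pos m) y τ *
          (R x1 (π x1 1) + ret R (shiftPol π) (m + 1) τ)
        = R x1 (π x1 1) + Vpol P R (m + 1) (shiftPol π) (m + 1) y := by
      intro y
      rw [Finset.sum_congr rfl (fun τ (_ : τ ∈ Finset.univ) =>
          mul_add (trajWeight P (shiftPol π) (m + 1) (Nat.succ_pos m) y τ) _ _),
        Finset.sum_add_distrib, ← Finset.sum_mul, hw y, one_mul, hr y]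
    simp only [hF, hG2, hG]
    exact final_algebra (P x1 (π x1 1))
      (fun y => ∑ τ : Fin (m + 1) → S, trajWeight P (shiftPol π) (m + 1) (Nat.succ_pos m) y τ *
        (ret R (shiftPol π) (m + 1) τ) ^ 2)
      (fun y => Vpol P R (m + 1) (shiftPol π) (m + 1) y)
      (R x1 (π x1 1))
      (varD (P x1 (π x1 1)) (Vpol P R (m + 1) (shiftPol π) (m + 1)))
      (hP1 x1 (π x1 1)) rfl

end LTV

/-- law of total variance for a finite-horizon MDP. For the trajectory
`(x_1,…,x_H)` of policy `π` started from `x1`,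
`E[ ∑_{h=1}^{H−1} Var_{Y∼P(·|x_h,π(x_h,h))}(V^π_{h+1}(Y)) ] = Var(G)` where `G` is the
return. (Expectations are finite sums weighted by the trajectory probabilities; for step
`h = p+1` with `p : Fin (H−1)`, `V^π_{h+1} = Vpol P R H π (H−1−p)`.) -/


theorem law_of_total_variance {S A : Type*} [Fintype S] [DecidableEq S]
    (P : S → A → S → ℝ) (R : S → A → ℝ) (H : ℕ) (hH : 0 < H) (π : S → ℕ → A)
    (hP0 : ∀ x a y, 0 ≤ P x a y) (hP1 : ∀ x a, ∑ y, P x a y = 1)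
    (hR0 : ∀ x a, 0 ≤ R x a) (hR1 : ∀ x a, R x a ≤ 1)
    (x1 : S) :
    ∑ τ : Fin H → S, trajWeight P π H hH x1 τ *
        (∑ p : Fin (H - 1),
          varD (P (τ (pos1 p)) (π (τ (pos1 p)) (p.val + 1)))
            (Vpol P R H π (H - 1 - p.val)))
      = (∑ τ : Fin H → S, trajWeight P π H hH x1 τ * (ret R π H τ) ^ 2)
        - (∑ τ : Fin H → S, trajWeight P π H hH x1 τ * ret R π H τ) ^ 2 := by
  obtain ⟨n, rfl⟩ : ∃ n, H = n + 1 := ⟨H - 1, by omega⟩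
  exact key P R hP1 n hH π x1
end

section
/- Let (S, A, P, R, H) be a finite-horizon MDP with rewards in [0,1] and π a policy. For the random trajectory (x_1, …, x_H) started from any fixed state x_1, where x_{h+1} ∼ P(·|x_h, π(x_h,h)), one has E[ Σ_{h=1}^{H−1} Var_{Y∼P(·|x_h,π(x_h,h))}( V^π_{h+1}(Y) ) ] ≤ H². -/
section Chain

variable {S : Type*} [Fintype S] [DecidableEq S]

lemma sum_pi_succ {n : ℕ} (g : (Fin (n+1) → S) → ℝ) :
    ∑ τ : Fin (n+1) → S, g τ = ∑ x : S, ∑ σ : Fin n → S, g (Fin.cons x σ) := by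
  rw [← Equiv.sum_comp (Fin.consEquiv fun _ => S) g, Fintype.sum_prod_type]
  rfl

/-- Backward recursion for the expected sum of `f` along a chain driven by `Q`. -/
noncomputable def Wgen (Q : ℕ → S → S → ℝ) (f : ℕ → S → ℝ) : ℕ → ℕ → S → ℝ
  | 0, _, _ => 0
  | j+1, k, x => f k x + ∑ y, Q k x y * Wgen Q f j (k+1) y

lemma cons_prod_split {n : ℕ} (Q : ℕ → S → S → ℝ) (k : ℕ) (x0 : S) (σ : Fin (n+1) → S) :
    (∏ p : Fin (n+1), Q (k + p) ((Fin.cons x0 σ : Fin (n+2) → S) p.castSucc)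
        ((Fin.cons x0 σ : Fin (n+2) → S) p.succ))
      = Q k x0 (σ 0) * ∏ p : Fin n, Q (k + 1 + p) (σ p.castSucc) (σ p.succ) := by
  rw [Fin.prod_univ_succ]
  congr 1
  apply Finset.prod_congr rfl
  intro p _
  have h1 : (Fin.cons x0 σ : Fin (n+2) → S) (p.succ.castSucc) = σ p.castSucc := by
    rw [← Fin.succ_castSucc, Fin.cons_succ]
  have h2 : (Fin.cons x0 σ : Fin (n+2) → S) (p.succ.succ) = σ p.succ := by
    rw [Fin.cons_succ]
  have h3 : k + ((p : ℕ) + 1) = k + 1 + (p : ℕ) := by omega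
  rw [h1, h2, Fin.val_succ, h3]

lemma norm_sum (Q : ℕ → S → S → ℝ) (hQ : ∀ k x, ∑ y, Q k x y = 1) :
    ∀ (n k : ℕ) (x : S),
      ∑ τ : Fin (n+1) → S, (if τ 0 = x then (1:ℝ) else 0) *
        ∏ p : Fin n, Q (k + p) (τ p.castSucc) (τ p.succ) = 1 := by
  intro n
  induction n with
  | zero =>
      intro k x
      rw [sum_pi_succ]
      simp [Finset.sum_ite_eq']
  | succ n ih =>
      intro k x
      rw [sum_pi_succ]
      calc ∑ x0 : S, ∑ σ : Fin (n+1) → S,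
              (if (Fin.cons x0 σ : Fin (n+2) → S) 0 = x then (1:ℝ) else 0) *
              ∏ p : Fin (n+1), Q (k + p) ((Fin.cons x0 σ : Fin (n+2) → S) p.castSucc)
                ((Fin.cons x0 σ : Fin (n+2) → S) p.succ)
          = ∑ x0 : S, (if x0 = x then (1:ℝ) else 0) * ∑ σ : Fin (n+1) → S,
              Q k x0 (σ 0) * ∏ p : Fin n, Q (k + 1 + p) (σ p.castSucc) (σ p.succ) := by
            apply Finset.sum_congr rfl; intro x0 _
            rw [Finset.mul_sum]
            apply Finset.sum_congr rfl; intro σ _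
            rw [cons_prod_split Q k x0 σ, Fin.cons_zero]
        _ = ∑ σ : Fin (n+1) → S, Q k x (σ 0) *
              ∏ p : Fin n, Q (k + 1 + p) (σ p.castSucc) (σ p.succ) := by
            simp [ite_mul, Finset.sum_ite_eq']
        _ = 1 := by
            have expand : ∀ σ : Fin (n+1) → S, Q k x (σ 0) *
                  ∏ p : Fin n, Q (k + 1 + p) (σ p.castSucc) (σ p.succ)
                = ∑ y : S, Q k x y * ((if σ 0 = y then (1:ℝ) else 0) *
                    ∏ p : Fin n, Q (k + 1 + p) (σ p.castSucc) (σ p.succ)) := by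
              intro σ
              rw [Finset.sum_eq_single (σ 0)]
              · simp
              · intro y _ hy; simp [Ne.symm hy]
              · simp
            simp_rw [expand]
            rw [Finset.sum_comm]
            have hy : ∀ y : S, ∑ σ : Fin (n+1) → S, Q k x y * ((if σ 0 = y then (1:ℝ) else 0) *
                ∏ p : Fin n, Q (k + 1 + p) (σ p.castSucc) (σ p.succ)) = Q k x y := by
              intro y
              rw [← Finset.mul_sum, ih (k+1) y, mul_one]
            simp_rw [hy]
            exact hQ k x

end Chain

section Chain2

variable {S : Type*} [Fintype S] [DecidableEq S]

lemma head_sum {n : ℕ} (Q : ℕ → S → S → ℝ) (k : ℕ) (x : S) (g : (Fin (n+1) → S) → ℝ) :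
    ∑ σ : Fin (n+1) → S, Q k x (σ 0) * g σ
      = ∑ y : S, Q k x y * ∑ σ : Fin (n+1) → S, (if σ 0 = y then (1:ℝ) else 0) * g σ := by
  simp_rw [Finset.mul_sum]
  rw [Finset.sum_comm]
  apply Finset.sum_congr rfl
  intro σ _
  rw [Finset.sum_eq_single (σ 0)]
  · simp
  · intro y _ hy; simp [Ne.symm hy]
  · simp

lemma cons_sum_split {n : ℕ} (f : ℕ → S → ℝ) (k : ℕ) (x0 : S) (σ : Fin (n+1) → S) :
    (∑ p : Fin (n+1), f (k + p) ((Fin.cons x0 σ : Fin (n+2) → S) p.castSucc))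
      = f k x0 + ∑ p : Fin n, f (k + 1 + p) (σ p.castSucc) := by
  rw [Fin.sum_univ_succ]
  congr 1
  apply Finset.sum_congr rfl
  intro p _
  have h1 : (Fin.cons x0 σ : Fin (n+2) → S) (p.succ.castSucc) = σ p.castSucc := by
    rw [← Fin.succ_castSucc, Fin.cons_succ]
  have h3 : k + ((p : ℕ) + 1) = k + 1 + (p : ℕ) := by omega
  rw [h1, Fin.val_succ, h3]

lemma traj_sum (Q : ℕ → S → S → ℝ) (hQ : ∀ k x, ∑ y, Q k x y = 1) (f : ℕ → S → ℝ) :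
    ∀ (n k : ℕ) (x : S),
      ∑ τ : Fin (n+1) → S, (if τ 0 = x then (1:ℝ) else 0) *
        (∏ p : Fin n, Q (k + p) (τ p.castSucc) (τ p.succ)) *
        (∑ p : Fin n, f (k + p) (τ p.castSucc))
      = Wgen Q f n k x := by
  intro n
  induction n with
  | zero => intro k x; simp [Wgen]
  | succ n ih =>
      intro k x
      rw [sum_pi_succ]
      have inner : ∀ y : S, ∑ σ : Fin (n+1) → S, (if σ 0 = y then (1:ℝ) else 0) *
            ((∏ p : Fin n, Q (k + 1 + p) (σ p.castSucc) (σ p.succ)) *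
              (f k x + ∑ p : Fin n, f (k + 1 + p) (σ p.castSucc)))
          = f k x + Wgen Q f n (k+1) y := by
        intro y
        have e1 : ∀ σ : Fin (n+1) → S, (if σ 0 = y then (1:ℝ) else 0) *
              ((∏ p : Fin n, Q (k + 1 + p) (σ p.castSucc) (σ p.succ)) *
                (f k x + ∑ p : Fin n, f (k + 1 + p) (σ p.castSucc)))
            = f k x * ((if σ 0 = y then (1:ℝ) else 0) *
                ∏ p : Fin n, Q (k + 1 + p) (σ p.castSucc) (σ p.succ))
              + ((if σ 0 = y then (1:ℝ) else 0) *
                  (∏ p : Fin n, Q (k + 1 + p) (σ p.castSucc) (σ p.succ))) *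
                  (∑ p : Fin n, f (k + 1 + p) (σ p.castSucc)) := by
          intro σ; ring
        simp_rw [e1]
        rw [Finset.sum_add_distrib, ← Finset.mul_sum, norm_sum Q hQ n (k+1) y, mul_one,
          ih (k+1) y]
      calc ∑ x0 : S, ∑ σ : Fin (n+1) → S,
              (if (Fin.cons x0 σ : Fin (n+2) → S) 0 = x then (1:ℝ) else 0) *
              (∏ p : Fin (n+1), Q (k + p) ((Fin.cons x0 σ : Fin (n+2) → S) p.castSucc)
                ((Fin.cons x0 σ : Fin (n+2) → S) p.succ)) *
              (∑ p : Fin (n+1), f (k + p) ((Fin.cons x0 σ : Fin (n+2) → S) p.castSucc))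
          = ∑ x0 : S, (if x0 = x then (1:ℝ) else 0) * ∑ σ : Fin (n+1) → S,
              Q k x0 (σ 0) *
                ((∏ p : Fin n, Q (k + 1 + p) (σ p.castSucc) (σ p.succ)) *
                  (f k x0 + ∑ p : Fin n, f (k + 1 + p) (σ p.castSucc))) := by
            apply Finset.sum_congr rfl; intro x0 _
            rw [Finset.mul_sum]
            apply Finset.sum_congr rfl; intro σ _
            rw [cons_prod_split Q k x0 σ, cons_sum_split f k x0 σ, Fin.cons_zero]
            ring
        _ = ∑ σ : Fin (n+1) → S, Q k x (σ 0) *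
              ((∏ p : Fin n, Q (k + 1 + p) (σ p.castSucc) (σ p.succ)) *
                (f k x + ∑ p : Fin n, f (k + 1 + p) (σ p.castSucc))) := by
            simp [ite_mul, Finset.sum_ite_eq']
        _ = ∑ y : S, Q k x y * (f k x + Wgen Q f n (k+1) y) := by
            rw [head_sum]
            apply Finset.sum_congr rfl; intro y _
            rw [inner y]
        _ = Wgen Q f (n+1) k x := by
            simp_rw [mul_add]
            rw [Finset.sum_add_distrib, ← Finset.sum_mul, hQ k x, one_mul]
            simp [Wgen]

end Chain2

section MDP

variable {S A : Type*} [Fintype S] [DecidableEq S]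
variable (P : S → A → S → ℝ) (R : S → A → ℝ) (H : ℕ) (π : S → ℕ → A)
variable (hP0 : ∀ x a y, 0 ≤ P x a y) (hP1 : ∀ x a, ∑ y, P x a y = 1)
variable (hR0 : ∀ x a, 0 ≤ R x a) (hR1 : ∀ x a, R x a ≤ 1)

include hP0 hP1 hR0 hR1

lemma Vpol_bounds : ∀ (j : ℕ) (x : S),
    0 ≤ Vpol P R H π j x ∧ Vpol P R H π j x ≤ (j : ℝ) := by
  intro j
  induction j with
  | zero => intro x; simp [Vpol]
  | succ j ih =>
      intro x
      simp only [Vpol]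
      constructor
      · exact add_nonneg (hR0 _ _) (Finset.sum_nonneg fun y _ =>
          mul_nonneg (hP0 _ _ _) (ih y).1)
      · push_cast
        have h1 : ∑ y, P x (π x (H - j)) y * Vpol P R H π j y ≤ (j : ℝ) := by
          calc ∑ y, P x (π x (H - j)) y * Vpol P R H π j y
              ≤ ∑ y, P x (π x (H - j)) y * (j : ℝ) :=
                Finset.sum_le_sum fun y _ =>
                  mul_le_mul_of_nonneg_left (ih y).2 (hP0 _ _ _)
            _ = (j : ℝ) := by rw [← Finset.sum_mul, hP1, one_mul]
        linarith [hR1 x (π x (H - j))]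

lemma Wgen_bound (n : ℕ) : ∀ (j k : ℕ), j + k = n → ∀ x : S,
    Wgen (fun m x y => P x (π x (m+1)) y)
        (fun m x => varD (P x (π x (m+1))) (Vpol P R (n+1) π (n - m))) j k x
      + (Vpol P R (n+1) π (j+1) x) ^ 2 ≤ ((j : ℝ) + 1) ^ 2 := by
  intro j
  induction j with
  | zero =>
      intro k hk x
      simp only [Wgen, Nat.cast_zero, zero_add]
      have hb := Vpol_bounds P R (n+1) π hP0 hP1 hR0 hR1 1 x
      have hb2 : Vpol P R (n+1) π 1 x ≤ 1 := by simpa using hb.2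
      rw [one_pow]
      nlinarith [hb.1, hb2]
  | succ j ih =>
      intro k hk x
      have hk' : j + (k + 1) = n := by omega
      have hH1 : n + 1 - (j + 1) = k + 1 := by omega
      have hnk : n - k = j + 1 := by omega
      have hV : Vpol P R (n+1) π (j+1+1) x
          = R x (π x (k+1)) + ∑ y, P x (π x (k+1)) y * Vpol P R (n+1) π (j+1) y := by
        simp only [Vpol, hH1]
      simp only [Wgen]
      rw [hnk, hV]
      have hvar : varD (P x (π x (k+1))) (Vpol P R (n+1) π (j+1))
          = ∑ y, P x (π x (k+1)) y * (Vpol P R (n+1) π (j+1) y) ^ 2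
            - (∑ y, P x (π x (k+1)) y * Vpol P R (n+1) π (j+1) y) ^ 2 := rfl
      rw [hvar]
      have hmain : ∑ y, P x (π x (k+1)) y * (Wgen (fun m x y => P x (π x (m+1)) y)
            (fun m x => varD (P x (π x (m+1))) (Vpol P R (n+1) π (n - m))) j (k+1) y
            + (Vpol P R (n+1) π (j+1) y) ^ 2) ≤ ((j : ℝ) + 1) ^ 2 := by
        calc _ ≤ ∑ y, P x (π x (k+1)) y * ((j : ℝ) + 1) ^ 2 :=
              Finset.sum_le_sum fun y _ =>
                mul_le_mul_of_nonneg_left (ih (k+1) hk' y) (hP0 _ _ _)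
          _ = ((j : ℝ) + 1) ^ 2 := by rw [← Finset.sum_mul, hP1, one_mul]
      have hsplit : ∑ y, P x (π x (k+1)) y * (Wgen (fun m x y => P x (π x (m+1)) y)
            (fun m x => varD (P x (π x (m+1))) (Vpol P R (n+1) π (n - m))) j (k+1) y
            + (Vpol P R (n+1) π (j+1) y) ^ 2)
          = ∑ y, P x (π x (k+1)) y * Wgen (fun m x y => P x (π x (m+1)) y)
              (fun m x => varD (P x (π x (m+1))) (Vpol P R (n+1) π (n - m))) j (k+1) y
            + ∑ y, P x (π x (k+1)) y * (Vpol P R (n+1) π (j+1) y) ^ 2 := by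
        rw [← Finset.sum_add_distrib]
        apply Finset.sum_congr rfl
        intro y _
        ring
      have hs0 : 0 ≤ ∑ y, P x (π x (k+1)) y * Vpol P R (n+1) π (j+1) y :=
        Finset.sum_nonneg fun y _ => mul_nonneg (hP0 _ _ _)
          (Vpol_bounds P R (n+1) π hP0 hP1 hR0 hR1 (j+1) y).1
      have hs1 : ∑ y, P x (π x (k+1)) y * Vpol P R (n+1) π (j+1) y ≤ (j : ℝ) + 1 := by
        calc ∑ y, P x (π x (k+1)) y * Vpol P R (n+1) π (j+1) y
            ≤ ∑ y, P x (π x (k+1)) y * ((j : ℝ) + 1) :=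
              Finset.sum_le_sum fun y _ => mul_le_mul_of_nonneg_left
                (by simpa using (Vpol_bounds P R (n+1) π hP0 hP1 hR0 hR1 (j+1) y).2)
                (hP0 _ _ _)
          _ = (j : ℝ) + 1 := by rw [← Finset.sum_mul, hP1, one_mul]
      have hr0 := hR0 x (π x (k+1))
      have hr1 := hR1 x (π x (k+1))
      push_cast
      nlinarith [hmain, hsplit, mul_nonneg hr0 hs0,
        mul_le_mul hr1 hs1 hs0 (by norm_num : (0:ℝ) ≤ 1)]

end MDP

/-- for a finite-horizon MDP with rewards in `[0,1]`, the expected sum along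
the trajectory of the next-state variances of the policy's value function is at most `H²`:
`E[ ∑_{h=1}^{H−1} Var_{Y∼P(·|x_h,π(x_h,h))}(V^π_{h+1}(Y)) ] ≤ H²`. (Expectations are finite
sums weighted by trajectory probabilities; for step `h = p+1` with `p : Fin (H−1)`,
`V^π_{h+1} = Vpol P R H π (H−1−p)`.) -/
theorem sum_variances_le_H_sq {S A : Type*} [Fintype S] [DecidableEq S]
    (P : S → A → S → ℝ) (R : S → A → ℝ) (H : ℕ) (hH : 0 < H) (π : S → ℕ → A)
    (hP0 : ∀ x a y, 0 ≤ P x a y) (hP1 : ∀ x a, ∑ y, P x a y = 1)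
    (hR0 : ∀ x a, 0 ≤ R x a) (hR1 : ∀ x a, R x a ≤ 1)
    (x1 : S) :
    ∑ τ : Fin H → S, trajWeight P π H hH x1 τ *
        (∑ p : Fin (H - 1),
          varD (P (τ (pos1 p)) (π (τ (pos1 p)) (p.val + 1)))
            (Vpol P R H π (H - 1 - p.val)))
      ≤ (H : ℝ) ^ 2 := by
  obtain ⟨n, rfl⟩ : ∃ n, H = n + 1 := ⟨H - 1, by omega⟩
  set Q : ℕ → S → S → ℝ := fun m x y => P x (π x (m+1)) y with hQdef
  set f : ℕ → S → ℝ :=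
    fun m x => varD (P x (π x (m+1))) (Vpol P R (n+1) π (n - m)) with hfdef
  have hQ : ∀ k x, ∑ y, Q k x y = 1 := fun k x => hP1 x _
  have hmain : ∑ τ : Fin (n+1) → S, trajWeight P π (n+1) hH x1 τ *
        (∑ p : Fin (n+1-1),
          varD (P (τ (pos1 p)) (π (τ (pos1 p)) (p.val + 1)))
            (Vpol P R (n+1) π (n+1-1-p.val)))
      = Wgen Q f n 0 x1 := by
    rw [← traj_sum Q hQ f n 0 x1]
    apply Finset.sum_congr rfl
    intro τ _
    simp only [trajWeight, hQdef, hfdef, zero_add]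
    rfl
  have hb := Wgen_bound P R π hP0 hP1 hR0 hR1 n n 0 (by omega) x1
  have hv : 0 ≤ (Vpol P R (n+1) π (n+1) x1) ^ 2 := sq_nonneg _
  rw [hmain]
  push_cast
  linarith
end

section
/- Let P be a probability distribution on a finite set S of cardinality S, let Y_1, …, Y_n be i.i.d. samples from P, and let P̂(y) = (1/n)·#{i : Y_i = y} be the empirical distribution. Then for any δ ∈ (0,1), with probability at least 1 − δ, ‖P̂ − P‖₁ = Σ_{y∈S} |P̂(y) − P(y)| ≤ √( 2·S·ln(2/δ) / n ). -/
/-!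
Since `P̂` and `P` both have total mass one, `‖P̂ - P‖₁ = 2 (P̂(A) - P(A))` for
`A = {y | P y ≤ P̂ y}`. Hence the event `‖P̂ - P‖₁ > ε` is covered by the `2 ^ |S|` events
`#{i | Y_i ∈ A} - n P(A) ≥ n ε / 2`, and by Hoeffding's inequality for the i.i.d. indicators
`1_A(Y_i) ∈ [0, 1]` each has probability at most `exp (-n ε² / 2)`. For the stated `ε` the
resulting bound `2 ^ |S| exp (-n ε² / 2)` equals `δ ^ |S| ≤ δ`.
-/

open MeasureTheory ProbabilityTheory Finset Real

theorem Finset.sum_abs_eq_two_mul_sum_filter_nonneg {ι : Type*} (s : Finset ι) (f : ι → ℝ)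
    (h : ∑ i ∈ s, f i = 0) : ∑ i ∈ s, |f i| = 2 * ∑ i ∈ s with 0 ≤ f i, f i := by
  calc ∑ i ∈ s, |f i| = ∑ i ∈ s, (2 * (if 0 ≤ f i then f i else 0) - f i) := by
        refine sum_congr rfl fun i _ => ?_
        split_ifs with hi
        · rw [abs_of_nonneg hi]; ring
        · rw [abs_of_neg (not_le.mp hi)]; ring
    _ = 2 * ∑ i ∈ s with 0 ≤ f i, f i := by
        rw [sum_sub_distrib, h, ← mul_sum, sum_filter, sub_zero]

section Empirical

variable {S : Type*} [DecidableEq S] {n : ℕ}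

noncomputable def empiricalDist (ω : Fin n → S) (y : S) : ℝ := (#{i | ω i = y} : ℝ) / n

theorem sum_empiricalDist (ω : Fin n → S) (A : Finset S) :
    ∑ y ∈ A, empiricalDist ω y = (∑ i, (A : Set S).indicator 1 (ω i)) / n := by
  simp only [empiricalDist, ← sum_div, card_filter, Nat.cast_sum]
  rw [sum_comm]
  congr 1
  refine sum_congr rfl fun i _ => ?_
  simp [Set.indicator_apply]

variable [Fintype S]

theorem sum_empiricalDist_univ (hn : n ≠ 0) (ω : Fin n → S) : ∑ y, empiricalDist ω y = 1 := by
  rw [sum_empiricalDist]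
  simp [hn]

theorem exists_sum_indicator_sub_ge_of_lt_sum_abs (hn : n ≠ 0) (p : S → ℝ) (hp : ∑ y, p y = 1)
    (ω : Fin n → S) {ε : ℝ} (h : ε < ∑ y, |empiricalDist ω y - p y|) :
    ∃ A : Finset S, n * (ε / 2) ≤ ∑ i, ((A : Set S).indicator 1 (ω i) - ∑ y ∈ A, p y) := by
  set A : Finset S := {y | 0 ≤ empiricalDist ω y - p y}
  refine ⟨A, ?_⟩
  have hA : ε / 2 < ∑ y ∈ A, (empiricalDist ω y - p y) := by
    have hmass : ∑ y, (empiricalDist ω y - p y) = 0 := by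
      rw [sum_sub_distrib, sum_empiricalDist_univ hn, hp, sub_self]
    rw [sum_abs_eq_two_mul_sum_filter_nonneg _ _ hmass] at h
    linarith
  have hn' : (0 : ℝ) < n := by positivity
  rw [sum_sub_distrib, sum_empiricalDist] at hA
  rw [sum_sub_distrib, sum_const, card_univ, Fintype.card_fin, nsmul_eq_mul]
  rw [div_sub' hn'.ne', lt_div_iff₀ hn'] at hA
  linarith

end Empirical

section Sampling

variable {S : Type*} [MeasurableSpace S] (μ : Measure S) [IsProbabilityMeasure μ] {n : ℕ}

theorem measureReal_pi_sum_indicator_sub_ge_le {A : Set S} (hA : MeasurableSet A) {t : ℝ}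
    (ht : 0 ≤ t) :
    (Measure.pi fun _ : Fin n => μ).real {ω | t ≤ ∑ i, (A.indicator 1 (ω i) - μ.real A)}
      ≤ exp (-2 * t ^ 2 / n) := by
  set X : S → ℝ := fun y => A.indicator 1 y - μ.real A
  have hXmeas : Measurable X := (measurable_one.indicator hA).sub_const _
  have hX : HasSubgaussianMGF X ((‖(1 : ℝ) - 0‖₊ / 2) ^ 2) μ := by
    simpa [integral_indicator_one hA] using
      hasSubgaussianMGF_of_mem_Icc (μ := μ) (X := A.indicator 1) (a := 0) (b := 1)
        (measurable_one.indicator hA).aemeasurable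
        (ae_of_all _ fun y => ⟨Set.indicator_nonneg (fun _ _ => zero_le_one) y,
          Set.indicator_le_self' (fun _ _ => zero_le_one) y⟩)
  have hcoord (i : Fin n) : HasSubgaussianMGF (fun ω : Fin n → S => X (ω i))
      ((‖(1 : ℝ) - 0‖₊ / 2) ^ 2) (Measure.pi fun _ => μ) := by
    refine HasSubgaussianMGF.of_map (X := X) (Y := fun ω : Fin n → S => ω i)
      (measurable_pi_apply i).aemeasurable ?_
    rw [(measurePreserving_eval (fun _ => μ) i).map_eq]
    exact hX
  have hindep : iIndepFun (fun i (ω : Fin n → S) => X (ω i)) (Measure.pi fun _ => μ) :=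
    iIndepFun_pi fun _ => hXmeas.aemeasurable
  refine (HasSubgaussianMGF.measure_sum_ge_le_of_iIndepFun hindep
    (fun i _ => hcoord i) ht).trans_eq ?_
  congr 1
  simp
  ring

variable [Fintype S] [MeasurableSingletonClass S]

theorem measureReal_pi_setOf_eq_sum_prod {ι : Type*} [Fintype ι] [DecidableEq ι]
    (p : (ι → S) → Prop) [DecidablePred p] :
    (Measure.pi fun _ : ι => μ).real {ω | p ω} = ∑ ω, if p ω then ∏ i, μ.real {ω i} else 0 := by
  rw [← sum_filter, ← coe_filter_univ, ← sum_measureReal_singleton]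
  refine sum_congr rfl fun ω _ => ?_
  simp [measureReal_def, ENNReal.toReal_prod]

theorem measureReal_pi_lt_sum_abs_empiricalDist_sub_le [DecidableEq S] (hn : n ≠ 0) {ε : ℝ}
    (hε : 0 ≤ ε) :
    (Measure.pi fun _ : Fin n => μ).real {ω | ε < ∑ y, |empiricalDist ω y - μ.real {y}|}
      ≤ 2 ^ Fintype.card S * exp (-n * ε ^ 2 / 2) := by
  set ν := Measure.pi fun _ : Fin n => μ
  set tail : Finset S → Set (Fin n → S) :=
    fun A => {ω | n * (ε / 2) ≤ ∑ i, ((A : Set S).indicator 1 (ω i) - μ.real A)}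
  have hcover : {ω | ε < ∑ y, |empiricalDist ω y - μ.real {y}|} ⊆
      ⋃ A ∈ (univ : Finset (Finset S)), tail A := by
    intro ω hω
    obtain ⟨A, hA⟩ := exists_sum_indicator_sub_ge_of_lt_sum_abs hn (fun y => μ.real {y})
      (by simp) ω hω
    simp only [Set.mem_iUnion]
    exact ⟨A, mem_univ A, by simpa [tail] using hA⟩
  calc ν.real _ ≤ ν.real (⋃ A ∈ (univ : Finset (Finset S)), tail A) :=
        measureReal_mono hcover (measure_ne_top ν _)
    _ ≤ ∑ A : Finset S, ν.real (tail A) := measureReal_biUnion_finset_le _ _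
    _ ≤ ∑ _A : Finset S, exp (-2 * (n * (ε / 2)) ^ 2 / n) :=
      sum_le_sum fun A _ => measureReal_pi_sum_indicator_sub_ge_le μ A.measurableSet (by positivity)
    _ = 2 ^ Fintype.card S * exp (-n * ε ^ 2 / 2) := by
      rw [sum_const, card_univ, Fintype.card_finset, nsmul_eq_mul]
      push_cast
      congr 2
      field_simp

end Sampling

theorem two_pow_mul_exp_neg_sq_sqrt_le {n k : ℕ} (hn : n ≠ 0) (hk : k ≠ 0) {δ : ℝ}
    (hδ0 : 0 < δ) (hδ1 : δ ≤ 1) :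
    2 ^ k * exp (-n * √(2 * k * log (2 / δ) / n) ^ 2 / 2) ≤ δ := by
  have hlog : 0 ≤ log (2 / δ) := log_nonneg (by rw [le_div_iff₀ hδ0]; linarith)
  have hexponent : -n * √(2 * k * log (2 / δ) / n) ^ 2 / 2 = -(k * log (2 / δ)) := by
    rw [sq_sqrt (by positivity)]
    field_simp
  rw [hexponent, exp_neg, exp_nat_mul, exp_log (by positivity), ← inv_pow, inv_div, ← mul_pow,
    mul_div_cancel₀ δ two_ne_zero]
  exact pow_le_of_le_one hδ0.le hδ1 hk

theorem exists_isProbabilityMeasure_measureReal_singleton {S : Type*} [Fintype S]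
    [MeasurableSpace S] [MeasurableSingletonClass S] (P : S → ℝ) (hP0 : ∀ y, 0 ≤ P y)
    (hP1 : ∑ y, P y = 1) :
    ∃ μ : Measure S, IsProbabilityMeasure μ ∧ ∀ y, μ.real {y} = P y := by
  have hsum : ∑ y, ENNReal.ofReal (P y) = 1 := by
    rw [← ENNReal.ofReal_sum_of_nonneg fun y _ => hP0 y, hP1, ENNReal.ofReal_one]
  refine ⟨(PMF.ofFintype _ hsum).toMeasure, inferInstance, fun y => ?_⟩
  rw [measureReal_def, PMF.toMeasure_apply_singleton _ _ (measurableSet_singleton y),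
    PMF.ofFintype_apply, ENNReal.toReal_ofReal (hP0 y)]

/-- Weissman et al.'s ℓ₁ concentration of the empirical distribution.
The samples are modeled by `ω : Fin n → S`, drawn i.i.d. from `P`, so the probability of an
event is the sum of `∏ i, P (ω i)` over the outcomes `ω` in the event. With probability at
least `1 − δ`, `‖P̂ − P‖₁ ≤ √(2·S·ln(2/δ)/n)` where `P̂ y = #{i : ω i = y}/n`. -/
theorem weissman_l1_concentration {S : Type*} [Fintype S] [DecidableEq S]
    (P : S → ℝ) (hP0 : ∀ y, 0 ≤ P y) (hP1 : ∑ y, P y = 1)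
    (n : ℕ) (hn : 0 < n) (δ : ℝ) (hδ0 : 0 < δ) (hδ1 : δ < 1) :
    1 - δ ≤ ∑ ω : Fin n → S,
      (if ∑ y, |((Finset.univ.filter (fun i => ω i = y)).card : ℝ) / n - P y|
            ≤ Real.sqrt (2 * (Fintype.card S : ℝ) * Real.log (2 / δ) / n)
        then ∏ i, P (ω i) else 0) := by
  let _ : MeasurableSpace S := ⊤
  obtain ⟨μ, hμ, hμP⟩ := exists_isProbabilityMeasure_measureReal_singleton P hP0 hP1
  have hS : Fintype.card S ≠ 0 := by
    rintro hS
    simp [Fintype.card_eq_zero_iff.mp hS] at hP1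
  set ε := √(2 * (Fintype.card S : ℝ) * log (2 / δ) / n)
  set bad := {ω : Fin n → S | ε < ∑ y, |empiricalDist ω y - μ.real {y}|}
  have hbad : (Measure.pi fun _ : Fin n => μ).real bad ≤ δ :=
    (measureReal_pi_lt_sum_abs_empiricalDist_sub_le μ hn.ne' (sqrt_nonneg _)).trans
      (two_pow_mul_exp_neg_sq_sqrt_le hn.ne' hS hδ0 hδ1.le)
  calc 1 - δ ≤ (Measure.pi fun _ : Fin n => μ).real badᶜ := by
        rw [measureReal_compl MeasurableSet.of_discrete, probReal_univ]
        linarith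
    _ = _ := by
        simp only [bad, Set.compl_ofPred, not_lt, measureReal_pi_setOf_eq_sum_prod, hμP,
          empiricalDist]
end
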